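/- arXiv:0705.2904 — 6 statements merged into one kernel-verified Lean document; each statement's English description precedes it below -/
import Mathlib

section
/- Let ρ_{AB} be a density operator on H_A ⊗ H_B (finite-dimensional), let ρ_A = Tr_B ρ_{AB} and ρ_B = Tr_A ρ_{AB}, and let r_A = rank(ρ_A). Then r_A · (id_A ⊗ ρ_B) − ρ_{AB} ≥ 0, i.e., r_A · (id_A ⊗ ρ_B) − ρ_{AB} is positive semidefinite. -/
/-!
Let `P` be the orthogonal projection onto the support of `ρ_A`. Then `ρ` is supported on
`range P ⊗ H_B`, so `ρ = (P ⊗ 1)ᴴ ρ (P ⊗ 1)`. Expanding `P ⊗ 1 = ∑ P i i' • (E i i' ⊗ 1)` in matrix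
units and applying the Cauchy–Schwarz inequality for the positive form `X ↦ Xᴴ ρ X` gives
`ρ ≤ (∑ |P i i'|²) • ∑ (E i i' ⊗ 1)ᴴ ρ (E i i' ⊗ 1)`. The sum of the conjugated terms is
`1 ⊗ ρ_B`, and `∑ |P i i'|² = tr P = rank ρ_A`.
-/

open scoped Classical ComplexOrder
open Kronecker

namespace Matrix

section PartialTrace

variable {m n R : Type*} [Fintype m] [Fintype n]

def partialTraceRight [AddCommMonoid R] (ρ : Matrix (m × n) (m × n) R) : Matrix m m R :=
  of fun i i' => ∑ j, ρ (i, j) (i', j)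

def partialTraceLeft [AddCommMonoid R] (ρ : Matrix (m × n) (m × n) R) : Matrix n n R :=
  of fun j j' => ∑ i, ρ (i, j) (i, j')

theorem trace_partialTraceRight [AddCommMonoid R] (ρ : Matrix (m × n) (m × n) R) :
    (partialTraceRight ρ).trace = ρ.trace :=
  (Fintype.sum_prod_type fun p => ρ p p).symm

omit [Fintype m] in
theorem IsHermitian.partialTraceRight [AddCommMonoid R] [StarAddMonoid R]
    {ρ : Matrix (m × n) (m × n) R} (hρ : ρ.IsHermitian) : (partialTraceRight ρ).IsHermitian := by
  ext i i'
  simp only [conjTranspose_apply, Matrix.partialTraceRight, of_apply, star_sum]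
  exact Finset.sum_congr rfl fun j _ => hρ.apply _ _

variable [DecidableEq n]

theorem partialTraceRight_kronecker_one_mul_mul [CommSemiring R] {l : Type*}
    (M : Matrix l m R) (ρ : Matrix (m × n) (m × n) R) (N : Matrix m l R) :
    partialTraceRight ((M ⊗ₖ (1 : Matrix n n R)) * ρ * (N ⊗ₖ (1 : Matrix n n R)))
      = M * partialTraceRight ρ * N := by
  ext i i'
  simp only [partialTraceRight, mul_apply, kroneckerMap_apply, one_apply, mul_ite, mul_one,
    mul_zero, ite_mul, zero_mul, Fintype.sum_prod_type, Finset.sum_ite_eq, Finset.mem_univ,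
    ↓reduceIte, Finset.sum_mul, Finset.sum_ite_eq', of_apply, Finset.mul_sum]
  rw [Finset.sum_comm]
  exact Finset.sum_congr rfl fun _ _ => Finset.sum_comm

variable [DecidableEq m]

omit [Fintype n] in
theorem kronecker_one_eq_sum_single [Semiring R] (Q : Matrix m m R) :
    Q ⊗ₖ (1 : Matrix n n R)
      = ∑ p : m × m, Q p.1 p.2 • (single p.1 p.2 (1 : R) ⊗ₖ (1 : Matrix n n R)) := by
  ext ⟨i, j⟩ ⟨i', j'⟩
  simp only [kroneckerMap_apply, sum_apply, smul_apply, single_apply, ite_and, ite_mul, one_mul,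
    zero_mul, smul_eq_mul, mul_ite, mul_zero, Fintype.sum_prod_type, Finset.sum_ite_irrel,
    Finset.sum_ite_eq', Finset.mem_univ, ↓reduceIte, Finset.sum_const_zero]

theorem one_kronecker_partialTraceLeft [CommSemiring R] [StarRing R]
    (ρ : Matrix (m × n) (m × n) R) :
    (1 : Matrix m m R) ⊗ₖ partialTraceLeft ρ
      = ∑ p : m × m, (single p.1 p.2 (1 : R) ⊗ₖ (1 : Matrix n n R))ᴴ * ρ
          * (single p.1 p.2 (1 : R) ⊗ₖ (1 : Matrix n n R)) := by
  ext ⟨i, j⟩ ⟨i', j'⟩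
  simp only [partialTraceLeft, kroneckerMap_apply, one_apply, of_apply, ite_mul, one_mul,
    zero_mul, sum_apply, mul_apply, conjTranspose_apply, single_apply, ite_and, mul_ite, mul_one,
    mul_zero, apply_ite star, star_one, star_zero, Fintype.sum_prod_type, Finset.sum_ite_eq',
    Finset.mem_univ, ↓reduceIte, Finset.sum_ite_eq, Finset.sum_ite_irrel, Finset.sum_const_zero]
  exact if_congr eq_comm rfl rfl

end PartialTrace

variable {𝕜 : Type*} [RCLike 𝕜]

theorem PosSemidef.exists_eq_conjTranspose_mul_self {n : Type*} [Fintype n] {A : Matrix n n 𝕜}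
    (hA : A.PosSemidef) : ∃ B : Matrix n n 𝕜, A = Bᴴ * B := by
  open scoped MatrixOrder Matrix.Norms.L2Operator in
  exact CStarAlgebra.nonneg_iff_eq_star_mul_self.mp hA.nonneg

/-- The Cauchy–Schwarz inequality for the positive sesquilinear form `(X, Y) ↦ Xᴴ ρ Y`,
in the Loewner order. -/
theorem PosSemidef.smul_sum_conjTranspose_mul_mul_sub {ι m n : Type*} [Fintype ι] [Fintype m]
    [Fintype n] {ρ : Matrix m m 𝕜} (hρ : ρ.PosSemidef) (c : ι → 𝕜) (K : ι → Matrix m n 𝕜) :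
    ((∑ i, star (c i) * c i) • ∑ i, (K i)ᴴ * ρ * K i
      - (∑ i, c i • K i)ᴴ * ρ * ∑ i, c i • K i).PosSemidef := by
  set N : ι × ι → Matrix m n 𝕜 := fun p => star (c p.2) • K p.1 - star (c p.1) • K p.2
  have lagrange : ∑ p, (N p)ᴴ * ρ * N p = (2 : 𝕜) • ((∑ i, star (c i) * c i) •
      ∑ i, (K i)ᴴ * ρ * K i - (∑ i, c i • K i)ᴴ * ρ * ∑ i, c i • K i) := by
    simp only [N, conjTranspose_sub, conjTranspose_smul, conjTranspose_sum, star_star,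
      Matrix.sub_mul, Matrix.mul_sub, Matrix.smul_mul, Matrix.mul_smul, Matrix.sum_mul,
      Matrix.mul_sum, Finset.sum_sub_distrib, Fintype.sum_prod_type, Finset.smul_sum,
      smul_smul, Finset.sum_smul, smul_sub]
    have swap_cross : ∑ x, ∑ y, (star (c x) * c y) • ((K x)ᴴ * ρ * K y)
        = ∑ x, ∑ y, (star (c y) * c x) • ((K y)ᴴ * ρ * K x) := Finset.sum_comm
    have swap_diag : ∑ x, ∑ y : ι, (star (c x) * c x) • ((K y)ᴴ * ρ * K y)
        = ∑ x, ∑ y : ι, (star (c y) * c y) • ((K x)ᴴ * ρ * K x) := Finset.sum_comm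
    rw [swap_cross, swap_diag]
    simp only [two_mul, add_smul, Finset.sum_add_distrib, mul_comm (c _) (star (c _))]
    abel
  have half_lagrange : ((2 : 𝕜)⁻¹ • ∑ p, (N p)ᴴ * ρ * N p).PosSemidef :=
    (posSemidef_sum _ fun p _ => hρ.conjTranspose_mul_mul_same (N p)).smul (by positivity)
  rwa [lagrange, smul_smul, inv_mul_cancel₀ two_ne_zero, one_smul] at half_lagrange

theorem PosSemidef.mul_kronecker_one_eq_zero {l m n : Type*} [Fintype l] [Fintype m] [Fintype n]
    [DecidableEq n] {ρ : Matrix (m × n) (m × n) 𝕜} (hρ : ρ.PosSemidef) {Q : Matrix m l 𝕜}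
    (hQ : partialTraceRight ρ * Q = 0) : ρ * (Q ⊗ₖ (1 : Matrix n n 𝕜)) = 0 := by
  obtain ⟨W, rfl⟩ := hρ.exists_eq_conjTranspose_mul_self
  have hWQ : W * (Q ⊗ₖ (1 : Matrix n n 𝕜)) = 0 := by
    rw [← trace_conjTranspose_mul_self_eq_zero_iff, ← trace_partialTraceRight, conjTranspose_mul,
      conjTranspose_kronecker, conjTranspose_one, ← Matrix.mul_assoc, Matrix.mul_assoc _ Wᴴ,
      partialTraceRight_kronecker_one_mul_mul, Matrix.mul_assoc, hQ, Matrix.mul_zero, trace_zero]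
  rw [Matrix.mul_assoc, hWQ, Matrix.mul_zero]

section SupportProjection

variable {n : Type*} [Fintype n] [DecidableEq n]

noncomputable def supportProj (A : Matrix n n 𝕜) : Matrix n n 𝕜 :=
  cfc (fun x : ℝ => if x = 0 then 0 else 1) A

variable {A : Matrix n n 𝕜}

theorem isHermitian_supportProj : (supportProj A).IsHermitian :=
  cfc_predicate _ A

theorem supportProj_mul_self : supportProj A * supportProj A = supportProj A := by
  rw [supportProj, ← cfc_mul (hf := A.finite_real_spectrum.continuousOn _)
    (hg := A.finite_real_spectrum.continuousOn _)]
  exact cfc_congr fun x _ => by split_ifs <;> simp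

theorem mul_supportProj (hA : A.IsHermitian) : A * supportProj A = A :=
  calc A * supportProj A = cfc (fun x : ℝ => x * if x = 0 then 0 else 1) A := by
        rw [cfc_mul (hf := A.finite_real_spectrum.continuousOn _)
          (hg := A.finite_real_spectrum.continuousOn _), cfc_id' ℝ A hA.isSelfAdjoint, supportProj]
    _ = cfc (fun x : ℝ => x) A := cfc_congr fun x _ => by split_ifs with h <;> simp [h]
    _ = A := cfc_id' ℝ A hA.isSelfAdjoint

theorem trace_supportProj (hA : A.IsHermitian) : (supportProj A).trace = A.rank := by
  rw [supportProj, hA.cfc_eq, IsHermitian.cfc, Unitary.conjStarAlgAut_apply, trace_mul_cycle,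
    Unitary.coe_star_mul_self, one_mul, trace_diagonal, hA.rank_eq_card_non_zero_eigs]
  simp only [Function.comp_apply, apply_ite, map_zero, map_one, ne_eq, Fintype.card_subtype,
    Finset.natCast_card_filter, ite_not]

theorem sum_star_supportProj_mul_supportProj (hA : A.IsHermitian) :
    ∑ p : n × n, star (supportProj A p.1 p.2) * supportProj A p.1 p.2 = A.rank :=
  calc ∑ p : n × n, star (supportProj A p.1 p.2) * supportProj A p.1 p.2
      = (supportProj A * supportProj A).trace := by
        rw [Fintype.sum_prod_type]
        refine Finset.sum_congr rfl fun i _ => Finset.sum_congr rfl fun j _ => ?_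
        rw [isHermitian_supportProj.apply j i, mul_comm]
    _ = A.rank := by rw [supportProj_mul_self, trace_supportProj hA]

end SupportProjection

end Matrix

open Matrix in
theorem rank_smul_id_kron_marginal_sub_self_posSemidef_general
    {a b : Type*} [Fintype a] [DecidableEq a] [Fintype b] [DecidableEq b]
    (ρ : Matrix (a × b) (a × b) ℂ) (hρ : ρ.PosSemidef) :
    ((((Matrix.of fun i i' : a => ∑ j, ρ (i, j) (i', j)).rank : ℂ)) •
        ((1 : Matrix a a ℂ) ⊗ₖ (Matrix.of fun j j' : b => ∑ i, ρ (i, j) (i, j')))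
      - ρ).PosSemidef := by
  set P := supportProj (partialTraceRight ρ)
  have hρA : (partialTraceRight ρ).IsHermitian := hρ.isHermitian.partialTraceRight
  have hρP : ρ * (P ⊗ₖ (1 : Matrix b b ℂ)) = ρ := by
    have hker := hρ.mul_kronecker_one_eq_zero (Q := 1 - P)
      (by rw [Matrix.mul_sub, Matrix.mul_one, mul_supportProj hρA, sub_self])
    calc ρ * (P ⊗ₖ (1 : Matrix b b ℂ))
        = ρ * ((1 - P + P) ⊗ₖ (1 : Matrix b b ℂ)) := by
          rw [add_kronecker, Matrix.mul_add, hker, zero_add]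
      _ = ρ := by rw [sub_add_cancel, one_kronecker_one, Matrix.mul_one]
  have hPρP : (P ⊗ₖ (1 : Matrix b b ℂ))ᴴ * ρ * (P ⊗ₖ (1 : Matrix b b ℂ)) = ρ := by
    rw [Matrix.mul_assoc, hρP, ← hρ.isHermitian.eq, ← conjTranspose_mul, hρP]
  have hCS := hρ.smul_sum_conjTranspose_mul_mul_sub (fun p : a × a => P p.1 p.2)
    (fun p => single p.1 p.2 (1 : ℂ) ⊗ₖ (1 : Matrix b b ℂ))
  rwa [sum_star_supportProj_mul_supportProj hρA, ← one_kronecker_partialTraceLeft,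
    ← kronecker_one_eq_sum_single, hPρP] at hCS

/-- For a density operator `ρ_{AB}` with marginals `ρ_A`, `ρ_B` and `r_A = rank ρ_A`,
the operator `r_A · (id_A ⊗ ρ_B) − ρ_{AB}` is positive semidefinite. -/
theorem rank_smul_id_kron_marginal_sub_self_posSemidef
    {a b : Type*} [Fintype a] [DecidableEq a] [Fintype b] [DecidableEq b]
    (ρ : Matrix (a × b) (a × b) ℂ) (hρ : ρ.PosSemidef) (htr : ρ.trace = 1) :
    ((((Matrix.of fun i i' : a => ∑ j, ρ (i, j) (i', j)).rank : ℂ)) •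
        ((1 : Matrix a a ℂ) ⊗ₖ (Matrix.of fun j j' : b => ∑ i, ρ (i, j) (i, j')))
      - ρ).PosSemidef :=
  rank_smul_id_kron_marginal_sub_self_posSemidef_general ρ hρ
end

section
/- Let |Ψ⟩ = Σ_{i=1}^{r} √α_i |φ_i⟩ ⊗ |ψ_i⟩ be a Schmidt decomposition of a unit vector in H_A ⊗ H_B with r terms, ρ_{AB} = |Ψ⟩⟨Ψ| and ρ_B = Tr_A ρ_{AB}. Then for every vector |Φ⟩ ∈ H_A ⊗ H_B, ⟨Φ| ρ_{AB} |Φ⟩ ≤ r · ⟨Φ| (id_A ⊗ ρ_B) |Φ⟩. -/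
open scoped Classical

/-- The Schmidt-decomposed vector `|Ψ⟩ = Σ_i √α_i |φ_i⟩ ⊗ |ψ_i⟩`. -/
noncomputable def schmidtVec {a b : Type*} {r : ℕ} (α : Fin r → ℝ)
    (φ : Fin r → a → ℂ) (ψ : Fin r → b → ℂ) : a × b → ℂ :=
  fun p => ∑ i, (Real.sqrt (α i) : ℂ) * φ i p.1 * ψ i p.2

/-!
Write `Φᵢ = Φ(i, ·)` and `Ψᵢ = Ψ(i, ·)`. The left-hand side is `|⟨Ψ, Φ⟩|² = |tr M|²` and the
right-hand side is `r ‖M‖²_F` for the `a × a` matrix `M i i' = ⟨Ψ_{i'}, Φᵢ⟩`. The Schmidt form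
gives `M i i' = Σₖ conj (φₖ i') cₖ i` with `cₖ i = √αₖ ⟨ψₖ, Φᵢ⟩`. Orthonormality of the `φₖ`
makes `‖M‖²_F = Σₖ ‖cₖ‖²`, while `tr M = Σₖ ⟨φₖ, cₖ⟩` is bounded by Cauchy–Schwarz twice:
`|⟨φₖ, cₖ⟩| ≤ ‖cₖ‖` and `(Σₖ ‖cₖ‖)² ≤ r Σₖ ‖cₖ‖²`.
-/

open Finset InnerProductSpace Function

section InnerProductSpace

variable {𝕜 E ι : Type*} [RCLike 𝕜] [NormedAddCommGroup E] [InnerProductSpace 𝕜 E] [Fintype ι]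

theorem norm_sum_inner_sq_le_card_mul_sum_norm_sq {v g : ι → E} (hv : ∀ k, ‖v k‖ ≤ 1) :
    ‖∑ k, ⟪v k, g k⟫_𝕜‖ ^ 2 ≤ Fintype.card ι * ∑ k, ‖g k‖ ^ 2 := by
  have hsum : ‖∑ k, ⟪v k, g k⟫_𝕜‖ ≤ ∑ k, ‖g k‖ :=
    (norm_sum_le _ _).trans <| sum_le_sum fun k _ =>
      (norm_inner_le_norm _ _).trans <| mul_le_of_le_one_left (norm_nonneg _) (hv k)
  calc ‖∑ k, ⟪v k, g k⟫_𝕜‖ ^ 2 ≤ (∑ k, ‖g k‖) ^ 2 := by gcongr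
    _ ≤ Fintype.card ι * ∑ k, ‖g k‖ ^ 2 := sq_sum_le_card_mul_sum_sq

theorem Orthonormal.norm_sum_smul_sq {v : ι → E} (hv : Orthonormal 𝕜 v) (l : ι → 𝕜) :
    ‖∑ k, l k • v k‖ ^ 2 = ∑ k, ‖l k‖ ^ 2 := by
  apply RCLike.ofReal_injective (K := 𝕜)
  push_cast
  rw [← inner_self_eq_norm_sq_to_K, hv.inner_sum]
  simp [RCLike.conj_mul]

end InnerProductSpace

section Coordinates

variable {a b ι : Type*}

theorem orthonormal_toLp_iff [Fintype a] [DecidableEq ι] {φ : ι → a → ℂ} :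
    Orthonormal ℂ (fun k => WithLp.toLp 2 (φ k)) ↔
      ∀ k l, ∑ i, star (φ k i) * φ l i = if k = l then 1 else 0 := by
  simp only [orthonormal_iff_ite, EuclideanSpace.inner_toLp_toLp, dotProduct_comm _ (star _)]
  rfl

theorem norm_sum_sum_star_mul_sq_le [Fintype a] [Fintype ι] {φ : ι → a → ℂ}
    (hφ : Orthonormal ℂ (fun k => WithLp.toLp 2 (φ k))) (c : ι → a → ℂ) :
    ‖∑ i, ∑ k, star (φ k i) * c k i‖ ^ 2 ≤
      Fintype.card ι * ∑ i, ∑ i', ‖∑ k, star (φ k i') * c k i‖ ^ 2 := by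
  have htrace : ∑ i, ∑ k, star (φ k i) * c k i =
      ∑ k, ⟪WithLp.toLp 2 (φ k), WithLp.toLp 2 (c k)⟫_ℂ := by
    rw [sum_comm]
    simp only [EuclideanSpace.inner_toLp_toLp, dotProduct_comm _ (star _)]
    rfl
  have hparseval : ∀ i, ∑ k, ‖c k i‖ ^ 2 = ∑ i', ‖∑ k, star (φ k i') * c k i‖ ^ 2 := by
    intro i
    simp_rw [← norm_star (c _ i), ← hφ.norm_sum_smul_sq, EuclideanSpace.norm_sq_eq]
    refine sum_congr rfl fun i' _ => ?_
    rw [← norm_star]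
    simp [mul_comm]
  calc ‖∑ i, ∑ k, star (φ k i) * c k i‖ ^ 2
      ≤ Fintype.card ι * ∑ k, ‖WithLp.toLp 2 (c k)‖ ^ 2 :=
        htrace ▸ norm_sum_inner_sq_le_card_mul_sum_norm_sq fun k => (hφ.1 k).le
    _ = Fintype.card ι * ∑ i, ∑ i', ‖∑ k, star (φ k i') * c k i‖ ^ 2 := by
        simp only [EuclideanSpace.norm_sq_eq]
        rw [sum_comm]
        simp [hparseval]

theorem sum_sum_star_mul_mul_star_mul_eq_norm_sq [Fintype ι] (x y : ι → ℂ) :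
    ∑ p, ∑ q, star (x p) * (y p * star (y q)) * x q = ((‖star y ⬝ᵥ x‖ ^ 2 : ℝ) : ℂ) := by
  push_cast
  rw [← Complex.conj_mul', dotProduct, map_sum, sum_mul_sum]
  refine sum_congr rfl fun p _ => sum_congr rfl fun q _ => ?_
  simp only [Pi.star_apply, map_mul, Complex.star_def, Complex.conj_conj]
  ring

theorem sum_star_mul_partialTrace_mul_eq_sum_norm_sq [Fintype a] [Fintype b]
    (Φ Ψ : a × b → ℂ) :
    ∑ i, ∑ j, ∑ j', star (Φ (i, j)) * (∑ i', Ψ (i', j) * star (Ψ (i', j'))) * Φ (i, j') =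
      ((∑ i, ∑ i', ‖star (curry Ψ i') ⬝ᵥ curry Φ i‖ ^ 2 : ℝ) : ℂ) := by
  simp only [Complex.ofReal_sum, ← sum_sum_star_mul_mul_star_mul_eq_norm_sq, curry]
  refine sum_congr rfl fun i _ => ?_
  simp_rw [mul_sum, sum_mul]
  exact (sum_congr rfl fun j _ => sum_comm).trans sum_comm

theorem star_dotProduct_eq_sum_curry [Fintype a] [Fintype b] (x y : a × b → ℂ) :
    star x ⬝ᵥ y = ∑ i, star (curry x i) ⬝ᵥ curry y i :=
  Fintype.sum_prod_type _

theorem star_curry_schmidtVec_dotProduct [Fintype b] {r : ℕ} (α : Fin r → ℝ)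
    (φ : Fin r → a → ℂ) (ψ : Fin r → b → ℂ) (i : a) (x : b → ℂ) :
    star (curry (schmidtVec α φ ψ) i) ⬝ᵥ x =
      ∑ k, star (φ k i) * ((Real.sqrt (α k) : ℂ) * (star (ψ k) ⬝ᵥ x)) := by
  simp only [dotProduct, schmidtVec, curry, Pi.star_apply, star_sum, sum_mul, mul_sum]
  rw [sum_comm]
  refine sum_congr rfl fun k _ => sum_congr rfl fun j _ => ?_
  simp only [star_mul, Complex.star_def, Complex.conj_ofReal]
  ring

end Coordinates

theorem pure_state_le_rank_smul_id_kron_marginal_general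
    {a b : Type*} [Fintype a] [Fintype b] (r : ℕ)
    (α : Fin r → ℝ)
    (φ : Fin r → a → ℂ) (ψ : Fin r → b → ℂ)
    (hφ : ∀ i j, ∑ k, star (φ i k) * φ j k = if i = j then 1 else 0)
    (Φ : a × b → ℂ) :
    (∑ p, ∑ q, star (Φ p) * (schmidtVec α φ ψ p * star (schmidtVec α φ ψ q)) * Φ q).re ≤
      (r : ℝ) *
        (∑ i : a, ∑ j : b, ∑ j' : b,
          star (Φ (i, j)) *
            (∑ i' : a, schmidtVec α φ ψ (i', j) * star (schmidtVec α φ ψ (i', j'))) *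
            Φ (i, j')).re := by
  rw [sum_sum_star_mul_mul_star_mul_eq_norm_sq, sum_star_mul_partialTrace_mul_eq_sum_norm_sq,
    Complex.ofReal_re, Complex.ofReal_re, star_dotProduct_eq_sum_curry]
  simp only [star_curry_schmidtVec_dotProduct]
  simpa only [Fintype.card_fin] using norm_sum_sum_star_mul_sq_le (orthonormal_toLp_iff.2 hφ)
    (fun k i => (Real.sqrt (α k) : ℂ) * (star (ψ k) ⬝ᵥ curry Φ i))

/-- For `|Ψ⟩ = Σ_{i=1}^r √α_i |φ_i⟩⊗|ψ_i⟩` a unit vector (Schmidt decomposition with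
`r` terms), `ρ_{AB} = |Ψ⟩⟨Ψ|` and `ρ_B = Tr_A ρ_{AB}`, every vector `|Φ⟩` satisfies
`⟨Φ|ρ_{AB}|Φ⟩ ≤ r · ⟨Φ|(id_A ⊗ ρ_B)|Φ⟩`. -/
theorem pure_state_le_rank_smul_id_kron_marginal
    {a b : Type*} [Fintype a] [Fintype b] (r : ℕ)
    (α : Fin r → ℝ) (hα : ∀ i, 0 < α i) (hαs : ∑ i, α i = 1)
    (φ : Fin r → a → ℂ) (ψ : Fin r → b → ℂ)
    (hφ : ∀ i j, ∑ k, star (φ i k) * φ j k = if i = j then 1 else 0)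
    (hψ : ∀ i j, ∑ k, star (ψ i k) * ψ j k = if i = j then 1 else 0)
    (Φ : a × b → ℂ) :
    (∑ p, ∑ q, star (Φ p) * (schmidtVec α φ ψ p * star (schmidtVec α φ ψ q)) * Φ q).re ≤
      (r : ℝ) *
        (∑ i : a, ∑ j : b, ∑ j' : b,
          star (Φ (i, j)) *
            (∑ i' : a, schmidtVec α φ ψ (i', j) * star (schmidtVec α φ ψ (i', j'))) *
            Φ (i, j')).re :=
  pure_state_le_rank_smul_id_kron_marginal_general r α φ ψ hφ Φ
end

section
/- For any type Q of length-n sequences over a finite alphabet X, the probability under Qⁿ of the type class of Q satisfies Qⁿ(T_Q^n(X)) ≥ (n+1)^{−(|X|−1)}. -/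
open scoped Classical

/-- The empirical type of a sequence `x ∈ Xⁿ`: `P_x(a) = |{i : x i = a}|/n`. -/
noncomputable def empType {X : Type*} [Fintype X] [DecidableEq X] {n : ℕ}
    (x : Fin n → X) (a : X) : ℝ :=
  ((Finset.univ.filter (fun i => x i = a)).card : ℝ) / n

/-!
Let `k = n Q` be the count vector of `Q`. The sequences of length `n` split into the type
classes `T_m`, indexed by the count vectors `m` with `∑ m = n`; such an `m` is determined by all
but one of its entries, so there are at most `(n + 1) ^ (|X| - 1)` of them. The class `T_k` is the
most likely one: `Qⁿ(T_m) = |T_m| ∏ Q_a ^ m_a`, where `|T_m| ∏ m_a! ≤ n!` with equality at `m = k`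
(the permutations of positions act transitively on a type class, with stabilizers
`∏ Sym(m_a)`), and `k_a! k_a ^ m_a ≤ m_a! k_a ^ k_a` for every letter `a`.
Hence `1 = ∑ₘ Qⁿ(T_m) ≤ (n + 1) ^ (|X| - 1) Qⁿ(T_k)`.
-/

open Finset

lemma Nat.factorial_mul_pow_le_factorial_mul_pow (a b : ℕ) :
    a.factorial * a ^ b ≤ b.factorial * a ^ a := by
  obtain hab | hba := le_total a b
  · calc a.factorial * a ^ b = a.factorial * a ^ (b - a) * a ^ a := by
          rw [mul_assoc, ← pow_add, Nat.sub_add_cancel hab]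
      _ ≤ b.factorial * a ^ a := Nat.mul_le_mul_right _ (factorial_mul_pow_sub_le_factorial hab)
  · calc a.factorial * a ^ b = b.factorial * a.descFactorial (a - b) * a ^ b := by
          rw [← factorial_mul_descFactorial (Nat.sub_le a b), Nat.sub_sub_self hba]
      _ ≤ b.factorial * a ^ (a - b) * a ^ b :=
          Nat.mul_le_mul_right _ (Nat.mul_le_mul_left _ (descFactorial_le_pow a _))
      _ = b.factorial * a ^ a := by rw [mul_assoc, ← pow_add, Nat.sub_add_cancel hba]

lemma card_piAntidiag_univ_le {X : Type*} [Fintype X] [DecidableEq X] (n : ℕ) :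
    #(piAntidiag (univ : Finset X) n) ≤ (n + 1) ^ (Fintype.card X - 1) := by
  cases isEmpty_or_nonempty X with
  | inl _ => simpa using card_le_one_of_subsingleton _
  | inr hX =>
    obtain ⟨a₀⟩ := hX
    let restrict (m : X → ℕ) (a : {a // a ≠ a₀}) : ℕ := m a
    have hmaps : Set.MapsTo restrict ↑(piAntidiag (univ : Finset X) n)
        ↑(Fintype.piFinset fun _ : {a // a ≠ a₀} ↦ range (n + 1)) := by
      intro m hm
      have hsum : ∑ a, m a = n := (mem_piAntidiag.1 hm).1
      simp only [mem_coe, Fintype.mem_piFinset, mem_range]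
      exact fun a ↦ Nat.lt_succ_of_le <|
        hsum ▸ single_le_sum (f := m) (fun _ _ ↦ Nat.zero_le _) (mem_univ a.1)
    have hinj : Set.InjOn restrict ↑(piAntidiag (univ : Finset X) n) := by
      intro m hm m' hm' h
      replace hm : ∑ a, m a = n := (mem_piAntidiag.1 hm).1
      replace hm' : ∑ a, m' a = n := (mem_piAntidiag.1 hm').1
      have hm₀ : m a₀ = m' a₀ := by
        rw [Fintype.sum_eq_add_sum_subtype_ne _ a₀] at hm hm'
        change m a₀ + ∑ a, restrict m a = n at hm
        change m' a₀ + ∑ a, restrict m' a = n at hm'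
        rw [h] at hm
        omega
      funext a
      by_cases ha : a = a₀
      · exact ha ▸ hm₀
      · exact congrFun h ⟨a, ha⟩
    calc #(piAntidiag univ n) ≤ #(Fintype.piFinset fun _ : {a // a ≠ a₀} ↦ range (n + 1)) :=
          card_le_card_of_injOn restrict hmaps hinj
      _ = (n + 1) ^ (Fintype.card X - 1) := by
          simp [Fintype.card_piFinset, Fintype.card_subtype_compl]

section TypeClass

variable {ι X : Type*} [Fintype ι] [DecidableEq X]

def typeCount (x : ι → X) (a : X) : ℕ := #{i | x i = a}

lemma typeCount_eq_card_subtype (x : ι → X) (a : X) :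
    typeCount x a = Fintype.card {i // x i = a} :=
  (Fintype.card_subtype _).symm

lemma typeCount_comp_perm (x : ι → X) (σ : Equiv.Perm ι) : typeCount (x ∘ σ) = typeCount x := by
  funext a
  simp only [typeCount_eq_card_subtype]
  exact Fintype.card_congr (σ.subtypeEquiv fun _ ↦ Iff.rfl)

def compPermEqEquiv (x y : ι → X) :
    {σ : Equiv.Perm ι // y ∘ σ = x} ≃ ∀ a, ({i // x i = a} ≃ {i // y i = a}) where
  toFun σ a := σ.1.subtypeEquiv fun i ↦ by rw [← congrFun σ.2 i]; rfl
  invFun e := ⟨(Equiv.sigmaFiberEquiv x).symm.trans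
      ((Equiv.sigmaCongrRight e).trans (Equiv.sigmaFiberEquiv y)),
    funext fun i ↦ (e (x i) ⟨i, rfl⟩).2⟩
  left_inv _ := rfl
  right_inv e := by
    funext a
    ext ⟨i, rfl⟩
    rfl

variable [Fintype X]

lemma sum_typeCount (x : ι → X) : ∑ a, typeCount x a = Fintype.card ι :=
  (card_eq_sum_card_fiberwise fun i _ ↦ mem_univ (x i)).symm

lemma prod_comp_eq_prod_pow_typeCount {M : Type*} [CommMonoid M] (f : X → M) (x : ι → X) :
    ∏ i, f (x i) = ∏ a, f a ^ typeCount x a := by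
  rw [← prod_fiberwise' univ x f]
  exact prod_congr rfl fun a _ ↦ prod_const _

variable [DecidableEq ι]

variable (ι) in
def typeClass (m : X → ℕ) : Finset (ι → X) := {x | typeCount x = m}

lemma card_subtype_comp_perm_eq {x y : ι → X} (h : typeCount x = typeCount y) :
    Fintype.card {σ : Equiv.Perm ι // y ∘ σ = x} = ∏ a, (typeCount y a).factorial := by
  rw [Fintype.card_congr (compPermEqEquiv x y), Fintype.card_pi]
  refine prod_congr rfl fun a _ ↦ ?_
  have hcard := congrFun h a
  rw [typeCount_eq_card_subtype, typeCount_eq_card_subtype] at hcard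
  rw [typeCount_eq_card_subtype, Fintype.card_equiv (Fintype.equivOfCardEq hcard), hcard]

lemma card_typeClass_typeCount_mul_prod_factorial (y : ι → X) :
    #(typeClass ι (typeCount y)) * ∏ a, (typeCount y a).factorial
      = (Fintype.card ι).factorial := by
  have hmaps : Set.MapsTo (fun σ : Equiv.Perm ι ↦ y ∘ σ) ↑(univ : Finset (Equiv.Perm ι))
      ↑(typeClass ι (typeCount y)) := fun σ _ ↦ by
    simp [typeClass, typeCount_comp_perm]
  rw [← Fintype.card_perm, ← card_univ, card_eq_sum_card_fiberwise hmaps, sum_const_nat]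
  intro x hx
  rw [← Fintype.card_subtype, card_subtype_comp_perm_eq]
  simpa [typeClass] using hx

lemma card_typeClass_mul_prod_factorial_le (m : X → ℕ) :
    #(typeClass ι m) * ∏ a, (m a).factorial ≤ (Fintype.card ι).factorial := by
  obtain hempty | ⟨y, hy⟩ := (typeClass ι m).eq_empty_or_nonempty
  · simp [hempty]
  · obtain rfl : typeCount y = m := by simpa [typeClass] using hy
    exact (card_typeClass_typeCount_mul_prod_factorial y).le

lemma sum_prod_typeClass {R : Type*} [CommSemiring R] (f : X → R) (m : X → ℕ) :
    ∑ x ∈ typeClass ι m, ∏ i, f (x i) = #(typeClass ι m) * ∏ a, f a ^ m a := by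
  rw [← nsmul_eq_mul, ← sum_const]
  refine sum_congr rfl fun x hx ↦ ?_
  rw [prod_comp_eq_prod_pow_typeCount, (by simpa [typeClass] using hx : typeCount x = m)]

lemma sum_sum_typeClass {M : Type*} [AddCommMonoid M] (g : (ι → X) → M) :
    ∑ m ∈ piAntidiag univ (Fintype.card ι), ∑ x ∈ typeClass ι m, g x = ∑ x, g x :=
  sum_fiberwise_of_maps_to (fun x _ ↦ by simp [sum_typeCount]) g

lemma card_typeClass_mul_prod_pow_le (y : ι → X) (m : X → ℕ) :
    #(typeClass ι m) * ∏ a, typeCount y a ^ m a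
      ≤ #(typeClass ι (typeCount y)) * ∏ a, typeCount y a ^ typeCount y a := by
  set k := typeCount y
  have hpos : 0 < ∏ a, (m a).factorial * (k a).factorial :=
    prod_pos fun a _ ↦ Nat.mul_pos (Nat.factorial_pos _) (Nat.factorial_pos _)
  refine Nat.le_of_mul_le_mul_right ?_ hpos
  calc #(typeClass ι m) * (∏ a, k a ^ m a) * ∏ a, (m a).factorial * (k a).factorial
      = #(typeClass ι m) * (∏ a, (m a).factorial) * ∏ a, (k a).factorial * k a ^ m a := by
        simp only [prod_mul_distrib]; ring
    _ ≤ (Fintype.card ι).factorial * ∏ a, (m a).factorial * k a ^ k a :=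
        Nat.mul_le_mul (card_typeClass_mul_prod_factorial_le m)
          (prod_le_prod' fun a _ ↦ Nat.factorial_mul_pow_le_factorial_mul_pow _ _)
    _ = #(typeClass ι k) * (∏ a, k a ^ k a) * ∏ a, (m a).factorial * (k a).factorial := by
        rw [← card_typeClass_typeCount_mul_prod_factorial y]
        simp only [prod_mul_distrib]; ring

lemma sum_prod_typeClass_le_of_sum_eq (y : ι → X) {m : X → ℕ}
    (hm : ∑ a, m a = Fintype.card ι) :
    ∑ x ∈ typeClass ι m, ∏ i, (typeCount y (x i) : ℝ) / Fintype.card ι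
      ≤ ∑ x ∈ typeClass ι (typeCount y), ∏ i, (typeCount y (x i) : ℝ) / Fintype.card ι := by
  have hprod : ∀ m : X → ℕ, ∑ a, m a = Fintype.card ι →
      ∏ a, ((typeCount y a : ℝ) / Fintype.card ι) ^ m a
        = ((∏ a, typeCount y a ^ m a : ℕ) : ℝ) / (Fintype.card ι : ℝ) ^ Fintype.card ι := by
    intro m hm
    simp only [div_pow, prod_div_distrib, prod_pow_eq_pow_sum, hm, Nat.cast_prod, Nat.cast_pow]
  rw [sum_prod_typeClass (fun a ↦ (typeCount y a : ℝ) / Fintype.card ι),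
    sum_prod_typeClass (fun a ↦ (typeCount y a : ℝ) / Fintype.card ι), hprod m hm,
    hprod _ (sum_typeCount y), ← mul_div_assoc, ← mul_div_assoc]
  exact div_le_div_of_nonneg_right (by exact_mod_cast card_typeClass_mul_prod_pow_le y m)
    (by positivity)

theorem inv_pow_le_sum_prod_typeClass [Nonempty ι] (y : ι → X) :
    (((Fintype.card ι : ℝ) + 1) ^ (Fintype.card X - 1))⁻¹
      ≤ ∑ x ∈ typeClass ι (typeCount y), ∏ i, (typeCount y (x i) : ℝ) / Fintype.card ι := by
  set N := Fintype.card ι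
  set Q : X → ℝ := fun a ↦ (typeCount y a : ℝ) / N
  set P : (X → ℕ) → ℝ := fun m ↦ ∑ x ∈ typeClass ι m, ∏ i, Q (x i)
  have hQ : ∑ a, Q a = 1 := by
    rw [← sum_div, ← Nat.cast_sum, sum_typeCount, div_self (by positivity)]
  have htotal : ∑ m ∈ piAntidiag univ N, P m = 1 := by
    rw [sum_sum_typeClass, ← Fintype.prod_sum, hQ, prod_const_one]
  have hmax : ∀ m ∈ piAntidiag univ N, P m ≤ P (typeCount y) :=
    fun m hm ↦ sum_prod_typeClass_le_of_sum_eq y (mem_piAntidiag.1 hm).1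
  rw [inv_le_iff_one_le_mul₀' (by positivity)]
  calc 1 ≤ #(piAntidiag (univ : Finset X) N) * P (typeCount y) := by
        rw [← htotal, ← nsmul_eq_mul]
        exact sum_le_card_nsmul _ _ _ hmax
    _ ≤ ((N : ℝ) + 1) ^ (Fintype.card X - 1) * P (typeCount y) := by
        gcongr
        exact_mod_cast card_piAntidiag_univ_le N

end TypeClass

lemma empType_eq_typeCount_div {X : Type*} [Fintype X] [DecidableEq X] {n : ℕ}
    (x : Fin n → X) (a : X) : empType x a = (typeCount x a : ℝ) / n :=
  rfl

/-- For any type `Q` of length-`n` sequences over `X`, the probability under `Qⁿ`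
of the type class of `Q` is at least `(n+1)^{−(|X|−1)}`. -/
theorem prob_type_class_ge
    {X : Type*} [Fintype X] [DecidableEq X] (n : ℕ) (hn : 0 < n)
    (Q : X → ℝ)
    (hQ : ∃ x0 : Fin n → X, ∀ a, Q a = empType x0 a) :
    (((n : ℝ) + 1) ^ (Fintype.card X - 1))⁻¹ ≤
      ∑ x ∈ Finset.univ.filter (fun x : Fin n → X => ∀ a, empType x a = Q a),
        ∏ i, Q (x i) := by
  obtain ⟨y, hy⟩ := hQ
  have := Fin.pos_iff_nonempty.mp hn
  have hQy : Q = fun a ↦ (typeCount y a : ℝ) / n :=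
    funext fun a ↦ (hy a).trans (empType_eq_typeCount_div y a)
  have hclass : univ.filter (fun x : Fin n → X => ∀ a, empType x a = Q a)
      = typeClass (Fin n) (typeCount y) := by
    ext x
    simp only [mem_filter, mem_univ, true_and, typeClass, hQy, funext_iff]
    refine forall_congr' fun a ↦ ?_
    rw [empType_eq_typeCount_div, div_left_inj' (by positivity), Nat.cast_inj]
  rw [hclass, hQy]
  simpa using inv_pow_le_sum_prod_typeClass y
end

section
/- Let ρ_{ABC} ∈ P(H_A ⊗ H_B ⊗ H_C) and σ_C ∈ P(H_C). Then H_min(ρ_{ABC}|σ_C) ≥ H_min(ρ_{BC}|σ_C) − log rank(ρ_A), where ρ_{BC} = Tr_A ρ_{ABC} and ρ_A = Tr_{BC} ρ_{ABC}. In particular, H_min(ρ_{ABC}|σ_C) ≥ H_min(ρ_{BC}|σ_C) − H_max(ρ_A). -/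
/-!
Write `ρ = B Bᴴ` and, for a test vector `x` on `A ⊗ B`, let `M_k` be the `A × A` matrix obtained
by pairing `x` with the `k`-th column of `B` reshaped to an `A × B` matrix. Then
`⟨x, ρ x⟩ = ∑ₖ |tr M_k|²` and `⟨x, (1 ⊗ ρ_B) x⟩ = ∑ₖ ‖M_k‖²_F`, while every `M_k` factors through
a block of a matrix `T` with `T Tᴴ = ρ_A`, so `rank M_k ≤ rank ρ_A`. Cauchy–Schwarz against the
orthogonal projection onto the range of `M` gives `|tr M|² ≤ rank M · ‖M‖²_F`, hence
`ρ ≤ rank ρ_A · (1 ⊗ ρ_B)`. Consequently every `λ` with `λ σ ≥ ρ_B` yields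
`rank ρ_A · λ · (1 ⊗ σ) ≥ ρ`, and taking `−log` of the optimal `λ`s gives the bound.
-/

open scoped Classical ComplexOrder
open Kronecker

/-- The min-entropy of `ρ` relative to the conditioning operator `E` (to be taken as
`id_A ⊗ σ_B`): `H_min(ρ|σ) = −log λ` where `λ = min{λ : λ·E − ρ ≥ 0}`, and `−∞` if
no such `λ` exists. -/
noncomputable def HminRel {n : Type*} [Fintype n] [DecidableEq n]
    (ρ E : Matrix n n ℂ) : EReal :=
  if {l : ℝ | (l • E - ρ).PosSemidef}.Nonempty then
    ((-Real.logb 2 (sInf {l : ℝ | (l • E - ρ).PosSemidef}) : ℝ) : EReal)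
  else ⊥

namespace Matrix

section Trace

variable {n : Type*} [Fintype n]

theorem PosSemidef.re_trace_pos {A : Matrix n n ℂ} (hA : A.PosSemidef) (h : A ≠ 0) :
    0 < A.trace.re :=
  (Complex.pos_iff.mp (hA.trace_nonneg.lt_of_ne (Ne.symm (mt hA.trace_eq_zero_iff.mp h)))).1

theorem re_trace_le_mul_re_trace {ρ E : Matrix n n ℂ} {l : ℝ} (h : (l • E - ρ).PosSemidef) :
    ρ.trace.re ≤ l * E.trace.re := by
  have := (Complex.nonneg_iff.mp h.trace_nonneg).1
  rw [trace_sub, trace_smul, Complex.sub_re, Complex.real_smul, Complex.re_ofReal_mul] at this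
  linarith

theorem exists_pos_le_of_posSemidef_smul_sub {ρ E : Matrix n n ℂ} (hρ : ρ.PosSemidef)
    (hρ0 : ρ ≠ 0) (hE : E.PosSemidef) {l₀ : ℝ} (hl₀ : (l₀ • E - ρ).PosSemidef) :
    ∃ c > 0, ∀ l : ℝ, (l • E - ρ).PosSemidef → c ≤ l := by
  have htρ := hρ.re_trace_pos hρ0
  have htE : 0 < E.trace.re := by
    refine (Complex.nonneg_iff.mp hE.trace_nonneg).1.lt_of_ne fun h0 => ?_
    have := re_trace_le_mul_re_trace hl₀
    rw [← h0, mul_zero] at this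
    linarith
  exact ⟨ρ.trace.re / E.trace.re, div_pos htρ htE, fun l hl =>
    (div_le_iff₀ htE).mpr (re_trace_le_mul_re_trace hl)⟩

theorem IsHermitian.exists_support_projection [DecidableEq n] {A : Matrix n n ℂ}
    (hA : A.IsHermitian) :
    ∃ P : Matrix n n ℂ, Pᴴ = P ∧ P * P = P ∧ P * A = A ∧ P.trace = A.rank := by
  set φ := Unitary.conjStarAlgAut ℂ (Matrix n n ℂ) hA.eigenvectorUnitary
  set d : n → ℂ := fun i => if hA.eigenvalues i = 0 then 0 else 1
  refine ⟨φ (diagonal d), ?_, ?_, ?_, ?_⟩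
  · rw [← star_eq_conjTranspose, ← map_star, star_eq_conjTranspose, diagonal_conjTranspose]
    congr 2
    ext i
    by_cases h : hA.eigenvalues i = 0 <;> simp [d, h]
  · rw [← map_mul, diagonal_mul_diagonal]
    congr 2
    ext i
    by_cases h : hA.eigenvalues i = 0 <;> simp [d, h]
  · conv_lhs => rw [hA.spectral_theorem]
    conv_rhs => rw [hA.spectral_theorem]
    rw [← map_mul, diagonal_mul_diagonal]
    congr 2
    ext i
    by_cases h : hA.eigenvalues i = 0 <;> simp [d, h]
  · rw [trace_map', trace_diagonal, hA.rank_eq_card_non_zero_eigs, Fintype.card_subtype,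
      Finset.card_filter, Nat.cast_sum]
    refine Finset.sum_congr rfl fun i _ => ?_
    by_cases h : hA.eigenvalues i = 0 <;> simp [d, h]

theorem mul_eq_self_of_mul_mul_conjTranspose {m : Type*} [Fintype m] {P : Matrix n n ℂ}
    {T : Matrix n m ℂ} (hP : Pᴴ = P) (hPT : P * (T * Tᴴ) = T * Tᴴ) : P * T = T := by
  have hTP : T * (Tᴴ * P) = T * Tᴴ := by
    simpa [Matrix.conjTranspose_mul, hP, Matrix.mul_assoc] using congrArg conjTranspose hPT
  have : (T - P * T) * (T - P * T)ᴴ = 0 := by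
    simp only [conjTranspose_sub, conjTranspose_mul, hP, Matrix.sub_mul, Matrix.mul_sub,
      Matrix.mul_assoc, hTP, hPT, sub_self]
  exact (sub_eq_zero.mp (self_mul_conjTranspose_eq_zero.mp this)).symm

theorem norm_trace_sq_le_rank_mul (M : Matrix n n ℂ) :
    ‖M.trace‖ ^ 2 ≤ M.rank * ∑ i, ∑ j, ‖M i j‖ ^ 2 := by
  obtain ⟨P, hPH, hPP, hPA, hPtr⟩ :=
    (isHermitian_mul_conjTranspose_self M).exists_support_projection
  have hPM : P * M = M := mul_eq_self_of_mul_mul_conjTranspose hPH hPA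
  have hP_sq : ∑ i, ∑ j, ‖P i j‖ ^ 2 = M.rank := by
    have hdiag : ∀ i, ((∑ j, ‖P i j‖ ^ 2 : ℝ) : ℂ) = P i i := fun i => by
      conv_rhs => rw [← hPP, mul_apply]
      push_cast
      refine Finset.sum_congr rfl fun j _ => ?_
      rw [← (show P.IsHermitian from hPH).apply j i, Complex.star_def, Complex.mul_conj']
    have : ((∑ i, ∑ j, ‖P i j‖ ^ 2 : ℝ) : ℂ) = M.rank := by
      rw [Complex.ofReal_sum, Finset.sum_congr rfl fun i _ => hdiag i,
        ← rank_self_mul_conjTranspose, ← hPtr]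
      rfl
    exact_mod_cast this
  have hnorm : ‖M.trace‖ ≤ ∑ p : n × n, ‖P p.1 p.2‖ * ‖M p.2 p.1‖ := by
    conv_lhs => rw [← hPM]
    rw [trace, Fintype.sum_prod_type]
    refine (norm_sum_le _ _).trans (Finset.sum_le_sum fun i _ => ?_)
    rw [diag_apply, mul_apply]
    exact (norm_sum_le _ _).trans_eq (Finset.sum_congr rfl fun j _ => norm_mul _ _)
  calc ‖M.trace‖ ^ 2 ≤ (∑ p : n × n, ‖P p.1 p.2‖ * ‖M p.2 p.1‖) ^ 2 := by gcongr
    _ ≤ (∑ p : n × n, ‖P p.1 p.2‖ ^ 2) * ∑ p : n × n, ‖M p.2 p.1‖ ^ 2 :=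
      Finset.sum_mul_sq_le_sq_mul_sq _ _ _
    _ = M.rank * ∑ i, ∑ j, ‖M i j‖ ^ 2 := by
      rw [Fintype.sum_prod_type, hP_sq, Fintype.sum_prod_type, Finset.sum_comm]

theorem star_dotProduct_mul_conjTranspose_mulVec {m : Type*} [Fintype m] (B : Matrix n m ℂ)
    (x : n → ℂ) : star x ⬝ᵥ ((B * Bᴴ) *ᵥ x) = ((∑ k, ‖(Bᴴ *ᵥ x) k‖ ^ 2 : ℝ) : ℂ) := by
  rw [← mulVec_mulVec, dotProduct_mulVec, ← conjTranspose_conjTranspose B, ← star_mulVec,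
    conjTranspose_conjTranspose]
  push_cast
  exact Finset.sum_congr rfl fun k _ => by rw [Pi.star_apply, Complex.star_def, Complex.conj_mul']

end Trace

section PartialTrace

variable {ι κ m R : Type*}

/-- `traceLeft` traces out the left tensor factor (`ρ_B = Tr_A ρ_{AB}`), `traceRight` the right
one (`ρ_A = Tr_B ρ_{AB}`). -/
def traceLeft [Fintype ι] [AddCommMonoid R] (ρ : Matrix (ι × κ) (ι × κ) R) : Matrix κ κ R :=
  of fun j j' => ∑ i, ρ (i, j) (i, j')

def traceRight [Fintype κ] [AddCommMonoid R] (ρ : Matrix (ι × κ) (ι × κ) R) : Matrix ι ι R :=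
  of fun i i' => ∑ j, ρ (i, j) (i', j)

@[simp]
theorem traceLeft_zero [Fintype ι] [AddCommMonoid R] :
    traceLeft (0 : Matrix (ι × κ) (ι × κ) R) = 0 := by
  ext
  simp [traceLeft]

@[simp]
theorem traceRight_zero [Fintype κ] [AddCommMonoid R] :
    traceRight (0 : Matrix (ι × κ) (ι × κ) R) = 0 := by
  ext
  simp [traceRight]

theorem traceRight_mul_conjTranspose [Fintype κ] [Fintype m] [NonUnitalSemiring R] [StarRing R]
    (B : Matrix (ι × κ) m R) :
    traceRight (B * Bᴴ) =
      (of fun i (p : κ × m) => B (i, p.1) p.2) * (of fun i (p : κ × m) => B (i, p.1) p.2)ᴴ := by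
  ext i i'
  simp [traceRight, mul_apply, Fintype.sum_prod_type]

theorem one_kronecker_traceLeft_mul_conjTranspose [Fintype ι] [DecidableEq ι] [Fintype m]
    [Semiring R] [StarRing R] (B : Matrix (ι × κ) m R) :
    (1 : Matrix ι ι R) ⊗ₖ traceLeft (B * Bᴴ) =
      (of fun (p : ι × κ) (q : m × ι × ι) => if p.1 = q.2.1 then B (q.2.2, p.2) q.1 else 0) *
      (of fun (p : ι × κ) (q : m × ι × ι) => if p.1 = q.2.1 then B (q.2.2, p.2) q.1 else 0)ᴴ := by
  ext ⟨i, j⟩ ⟨i', j'⟩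
  rw [kroneckerMap_apply, mul_apply]
  by_cases h : i = i'
  · subst h
    simp only [one_apply_eq, traceLeft, mul_apply, conjTranspose_apply, of_apply, one_mul, ite_mul,
      zero_mul, Fintype.sum_prod_type, Finset.sum_ite_irrel, Finset.sum_const_zero,
      Finset.sum_ite_eq, Finset.mem_univ, ↓reduceIte]
    rw [Finset.sum_comm]
  · rw [one_apply_ne h, zero_mul]
    refine (Finset.sum_eq_zero fun q _ => ?_).symm
    by_cases hq : i = q.2.1
    · simp [hq ▸ Ne.symm h]
    · simp [hq]

end PartialTrace

open scoped MatrixOrder in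
theorem PosSemidef.rank_traceRight_smul_one_kronecker_traceLeft_sub {ι κ : Type*} [Fintype ι]
    [DecidableEq ι] [Fintype κ] {ρ : Matrix (ι × κ) (ι × κ) ℂ} (hρ : ρ.PosSemidef) :
    (((traceRight ρ).rank : ℝ) • ((1 : Matrix ι ι ℂ) ⊗ₖ traceLeft ρ) - ρ).PosSemidef := by
  obtain ⟨B, rfl⟩ : ∃ B : Matrix (ι × κ) (ι × κ) ℂ, ρ = B * Bᴴ :=
    CStarAlgebra.nonneg_iff_eq_mul_star_self.mp hρ.nonneg
  rw [traceRight_mul_conjTranspose, rank_self_mul_conjTranspose,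
    one_kronecker_traceLeft_mul_conjTranspose]
  set T : Matrix ι (κ × (ι × κ)) ℂ := of fun i p => B (i, p.1) p.2
  set D : Matrix (ι × κ) ((ι × κ) × ι × ι) ℂ :=
    of fun p q => if p.1 = q.2.1 then B (q.2.2, p.2) q.1 else 0
  set M : (ι × κ → ℂ) → ι × κ → Matrix ι ι ℂ :=
    fun x k => of (fun i j => x (i, j)) * (T.submatrix id (·, k))ᴴ
  have hBx : ∀ x k, (Bᴴ *ᵥ x) k = (M x k).trace := fun x k => by
    simp [M, T, mulVec, dotProduct, trace, mul_apply, Fintype.sum_prod_type, mul_comm]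
  have hDx : ∀ x k i i', (Dᴴ *ᵥ x) (k, i, i') = M x k i i' := fun x k i i' => by
    simp [M, T, D, mulVec, dotProduct, mul_apply, Fintype.sum_prod_type, mul_comm, apply_ite]
  have hrankM : ∀ x k, (M x k).rank ≤ T.rank := fun x k =>
    (rank_mul_le_right _ _).trans ((rank_conjTranspose _).trans_le (rank_submatrix_le _ _ _))
  refine .of_dotProduct_mulVec_nonneg (((posSemidef_self_mul_conjTranspose D).smul
    (Nat.cast_nonneg _)).1.sub (isHermitian_mul_conjTranspose_self B)) fun x => ?_
  rw [sub_mulVec, dotProduct_sub, smul_mulVec, dotProduct_smul,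
    star_dotProduct_mul_conjTranspose_mulVec, star_dotProduct_mul_conjTranspose_mulVec,
    Complex.real_smul, ← Complex.ofReal_mul, ← Complex.ofReal_sub, Complex.zero_le_real,
    sub_nonneg]
  calc ∑ k, ‖(Bᴴ *ᵥ x) k‖ ^ 2 = ∑ k, ‖(M x k).trace‖ ^ 2 := by simp only [hBx]
    _ ≤ ∑ k, (T.rank : ℝ) * ∑ i, ∑ i', ‖M x k i i'‖ ^ 2 := Finset.sum_le_sum fun k _ =>
      (norm_trace_sq_le_rank_mul _).trans (by gcongr; exact hrankM x k)
    _ = T.rank * ∑ q, ‖(Dᴴ *ᵥ x) q‖ ^ 2 := by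
      simp only [Finset.mul_sum, Fintype.sum_prod_type, hDx]

end Matrix

open Matrix

section MinEntropy

variable {n : Type*} [Fintype n] [DecidableEq n]

theorem HminRel_zero_left {E : Matrix n n ℂ} (hE : E.PosSemidef) : HminRel 0 E = 0 := by
  -- for `E = 0` every `l` is feasible, and `sInf univ = 0` is a junk value
  have hfeas : {l : ℝ | (l • E - 0).PosSemidef} = if E = 0 then Set.univ else Set.Ici 0 := by
    split_ifs with hE0
    · simp [hE0, PosSemidef.zero]
    ext l
    simp only [sub_zero, Set.mem_ofPred_eq, Set.mem_Ici]
    refine ⟨fun hl => ?_, fun hl => hE.smul hl⟩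
    have := re_trace_le_mul_re_trace (ρ := 0) (by rwa [sub_zero])
    rw [trace_zero, Complex.zero_re] at this
    exact nonneg_of_mul_nonneg_left this (hE.re_trace_pos hE0)
  have hinf : sInf {l : ℝ | (l • E - 0).PosSemidef} = 0 := by
    rw [hfeas]
    split_ifs
    exacts [Real.sInf_univ, csInf_Ici]
  rw [HminRel, if_pos ⟨0, by simpa using PosSemidef.zero⟩, hinf, Real.logb_zero, neg_zero]
  rfl

theorem HminRel_sub_logb_le {m : Type*} [Fintype m] [DecidableEq m] {ρ E : Matrix n n ℂ}
    {ρ' E' : Matrix m m ℂ} (hρ : ρ.PosSemidef) (hρ0 : ρ ≠ 0) (hE : E.PosSemidef) {r : ℝ}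
    (hr : 0 ≤ r) (h : ∀ l : ℝ, (l • E' - ρ').PosSemidef → ((r * l) • E - ρ).PosSemidef) :
    HminRel ρ' E' - (Real.logb 2 r : EReal) ≤ HminRel ρ E := by
  unfold HminRel
  set S := {l : ℝ | (l • E - ρ).PosSemidef}
  set S' := {l : ℝ | (l • E' - ρ').PosSemidef}
  rcases S'.eq_empty_or_nonempty with hS' | ⟨l₀, hl₀⟩
  · rw [if_neg (Set.not_nonempty_iff_eq_empty.mpr hS'), EReal.bot_sub]
    exact bot_le
  obtain ⟨c, hc, hcS⟩ := exists_pos_le_of_posSemidef_smul_sub hρ hρ0 hE (h l₀ hl₀)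
  have hpos : 0 < sInf S := hc.trans_le (le_csInf ⟨_, h l₀ hl₀⟩ hcS)
  have hle : ∀ l ∈ S', sInf S ≤ r * l := fun l hl => csInf_le ⟨c, hcS⟩ (h l hl)
  have hr0 : 0 < r := hr.lt_of_ne fun h0 => by
    have := hpos.trans_le (hle l₀ hl₀)
    rw [← h0, zero_mul] at this
    exact this.false
  have hinf : sInf S ≤ r * sInf S' := by
    rw [← div_le_iff₀' hr0]
    exact le_csInf ⟨l₀, hl₀⟩ fun l hl => (div_le_iff₀' hr0).mpr (hle l hl)
  have hinf' : 0 < sInf S' := pos_of_mul_pos_right (hpos.trans_le hinf) hr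
  have hlog := Real.logb_le_logb_of_le one_lt_two hpos hinf
  rw [Real.logb_mul hr0.ne' hinf'.ne'] at hlog
  rw [if_pos ⟨l₀, hl₀⟩, if_pos ⟨_, h l₀ hl₀⟩, ← EReal.coe_sub, EReal.coe_le_coe_iff]
  linarith

end MinEntropy

theorem HminRel_traceLeft_sub_logb_rank_le {ι κ : Type*} [Fintype ι] [DecidableEq ι] [Fintype κ]
    [DecidableEq κ] {ρ : Matrix (ι × κ) (ι × κ) ℂ} (hρ : ρ.PosSemidef) {E : Matrix κ κ ℂ}
    (hE : E.PosSemidef) :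
    HminRel (traceLeft ρ) E - (Real.logb 2 (traceRight ρ).rank : EReal) ≤
      HminRel ρ ((1 : Matrix ι ι ℂ) ⊗ₖ E) := by
  have hIE := (PosSemidef.one (n := ι) (R := ℂ)).kronecker hE
  by_cases hρ0 : ρ = 0
  · simp [hρ0, HminRel_zero_left hE, HminRel_zero_left hIE]
  set r : ℝ := ((traceRight ρ).rank : ℝ)
  refine HminRel_sub_logb_le hρ hρ0 hIE (Nat.cast_nonneg _) fun l hl => ?_
  have hsplit : (r * l) • ((1 : Matrix ι ι ℂ) ⊗ₖ E) - ρ =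
      r • ((1 : Matrix ι ι ℂ) ⊗ₖ (l • E - traceLeft ρ)) + (r • (1 ⊗ₖ traceLeft ρ) - ρ) := by
    ext p q
    simp only [Matrix.sub_apply, Matrix.add_apply, Matrix.smul_apply, kroneckerMap_apply,
      Complex.real_smul]
    push_cast
    ring
  rw [hsplit]
  exact ((PosSemidef.one.kronecker hl).smul (Nat.cast_nonneg _)).add
    hρ.rank_traceRight_smul_one_kronecker_traceLeft_sub

/-- `H_min(ρ_{ABC}|σ_C) ≥ H_min(ρ_{BC}|σ_C) − log rank(ρ_A) = H_min(ρ_{BC}|σ_C) − H_max(ρ_A)`. -/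
theorem hmin_chain_rank
    {a b c : Type*} [Fintype a] [DecidableEq a] [Fintype b] [DecidableEq b]
    [Fintype c] [DecidableEq c]
    (ρABC : Matrix (a × b × c) (a × b × c) ℂ) (hρ : ρABC.PosSemidef)
    (σC : Matrix c c ℂ) (hσ : σC.PosSemidef) :
    HminRel ρABC
        (Matrix.of fun p q : a × b × c =>
          if p.1 = q.1 ∧ p.2.1 = q.2.1 then σC p.2.2 q.2.2 else 0) ≥
      HminRel (Matrix.of fun p q : b × c => ∑ i, ρABC (i, p.1, p.2) (i, q.1, q.2))
          ((1 : Matrix b b ℂ) ⊗ₖ σC) -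
        ((Real.logb 2
          ((Matrix.of fun i i' : a => ∑ j, ∑ k, ρABC (i, j, k) (i', j, k)).rank) : ℝ) :
          EReal) := by
  have hE : (Matrix.of fun p q : a × b × c =>
      if p.1 = q.1 ∧ p.2.1 = q.2.1 then σC p.2.2 q.2.2 else 0) =
      (1 : Matrix a a ℂ) ⊗ₖ ((1 : Matrix b b ℂ) ⊗ₖ σC) := by
    ext ⟨i, j, k⟩ ⟨i', j', k'⟩
    by_cases hi : i = i' <;> by_cases hj : j = j' <;> simp [one_apply, hi, hj]
  have hρA : (Matrix.of fun i i' : a => ∑ j, ∑ k, ρABC (i, j, k) (i', j, k)) =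
      traceRight ρABC := by
    ext
    simp [traceRight, Fintype.sum_prod_type]
  rw [hE, hρA]
  exact HminRel_traceLeft_sub_logb_rank_le hρ (PosSemidef.one.kronecker hσ)
end

section
/- Let ρ_{XBC} ∈ P(H_X ⊗ H_B ⊗ H_C) be classical on H_X, i.e., ρ_{XBC} = Σ_x P_X(x) |x⟩⟨x| ⊗ ρ_{BC}^x for an orthonormal basis {|x⟩}. Then for any σ_C ∈ P(H_C), H_min(ρ_{XBC}|σ_C) ≥ H_min(ρ_{BC}|σ_C), where ρ_{BC} = Tr_X ρ_{XBC}. -/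
open scoped Classical ComplexOrder
open Kronecker

/-!
With `E = 1_B ⊗ σ_C`, the operator `λ (1_X ⊗ E) - ρ_{XBC}` is block diagonal with blocks
`λ E - P(x) ρ^x`, so `λ` is feasible for `ρ_{XBC}` iff it is feasible for every `P(x) ρ^x`.
Each block is dominated by `ρ_{BC} = Σ_x P(x) ρ^x`, so every `λ` feasible for `ρ_{BC}` is feasible
for `ρ_{XBC}`: the infimum for `ρ_{XBC}` is smaller and its min-entropy larger. Conversely, summing
the blocks shows that `|X| λ` is feasible for `ρ_{BC}`; this is what handles the case where the
infimum for `ρ_{XBC}` is `0`, at which `logb 2` takes a junk value.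
-/

open Matrix Set
open scoped Pointwise

theorem Matrix.posSemidef_blockDiagonal_iff {m o 𝕜 : Type*} [Fintype m] [Fintype o]
    [DecidableEq o] [RCLike 𝕜] {M : o → Matrix m m 𝕜} :
    (blockDiagonal M).PosSemidef ↔ ∀ k, (M k).PosSemidef := by
  refine ⟨fun h k => ?_, fun h => ?_⟩
  · convert h.submatrix (fun i => (i, k))
    ext
    simp
  open MatrixOrder in
  choose B hB using fun k => CStarAlgebra.nonneg_iff_eq_star_mul_self.mp (h k).nonneg
  have : blockDiagonal M = (blockDiagonal B)ᴴ * blockDiagonal B := by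
    rw [blockDiagonal_conjTranspose, ← blockDiagonal_mul]
    congr 1
    ext1 k
    simp [hB, star_eq_conjTranspose]
  rw [this]
  exact posSemidef_conjTranspose_mul_self _

def hminFeasible {n : Type*} (ρ E : Matrix n n ℂ) : Set ℝ :=
  {l | (l • E - ρ).PosSemidef}

noncomputable def hminOfFeasible (S : Set ℝ) : EReal :=
  if S.Nonempty then ((-Real.logb 2 (sInf S) : ℝ) : EReal) else ⊥

theorem hminRel_eq_hminOfFeasible {n : Type*} [Fintype n] [DecidableEq n] (ρ E : Matrix n n ℂ) :
    HminRel ρ E = hminOfFeasible (hminFeasible ρ E) :=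
  rfl

theorem hminOfFeasible_le {S T : Set ℝ} (hST : S ⊆ T) (hT : T ⊆ Ici 0) {c : ℝ} (hc : 0 ≤ c)
    (hscale : c • T ⊆ S) : hminOfFeasible S ≤ hminOfFeasible T := by
  unfold hminOfFeasible
  rcases S.eq_empty_or_nonempty with rfl | hS
  · simp
  have hTne := hS.mono hST
  rw [if_pos hS, if_pos hTne, EReal.coe_le_coe_iff, neg_le_neg_iff]
  have hTbdd : BddBelow T := ⟨0, hT⟩
  have hle : sInf T ≤ sInf S := csInf_le_csInf hTbdd hS hST
  rcases (le_csInf hTne hT).eq_or_lt with h0 | hpos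
  -- `logb 2` is not monotone at the junk value `logb 2 0 = 0`; the scaling forces `sInf S = 0` too.
  · have hS0 : sInf S ≤ 0 :=
      calc sInf S ≤ sInf (c • T) := csInf_le_csInf (hTbdd.mono hST) hTne.smul_set hscale
        _ = c * sInf T := Real.sInf_smul_of_nonneg hc T
        _ = 0 := by rw [← h0, mul_zero]
    rw [← h0, le_antisymm hS0 (h0 ▸ hle)]
  · exact Real.logb_le_logb_of_le one_lt_two hpos hle

section Feasible

variable {n : Type*}

theorem hminFeasible_subset_of_posSemidef_sub {ρ ρ' : Matrix n n ℂ} (E : Matrix n n ℂ) (h : (ρ' - ρ).PosSemidef) :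
    hminFeasible ρ' E ⊆ hminFeasible ρ E := fun l hl => by
  simpa only [hminFeasible, mem_ofPred_eq, sub_add_sub_cancel] using hl.add h

theorem sum_mem_hminFeasible_sum {ι : Type*} (s : Finset ι) {ρ : ι → Matrix n n ℂ} {l : ι → ℝ}
    {E : Matrix n n ℂ} (h : ∀ i ∈ s, l i ∈ hminFeasible (ρ i) E) :
    ∑ i ∈ s, l i ∈ hminFeasible (∑ i ∈ s, ρ i) E := by
  simpa only [hminFeasible, mem_ofPred_eq, Finset.sum_smul, Finset.sum_sub_distrib]
    using posSemidef_sum s h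

theorem hminFeasible_subset_Ici_zero [Fintype n] {ρ E : Matrix n n ℂ} (hρ : ρ.PosSemidef)
    (hE : E.PosSemidef) (hE0 : E ≠ 0) : hminFeasible ρ E ⊆ Ici 0 := by
  intro l hl
  rw [mem_Ici]
  have htrE : 0 < E.trace := hE.trace_nonneg.lt_of_ne (Ne.symm (hE.trace_eq_zero_iff.not.mpr hE0))
  have htr : 0 ≤ (l : ℂ) * E.trace :=
    calc 0 ≤ ρ.trace := hρ.trace_nonneg
      _ ≤ (l : ℂ) * E.trace := by
        have := hl.trace_nonneg
        rw [trace_sub, trace_smul, Complex.real_smul] at this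
        exact sub_nonneg.mp this
  by_contra! hl0
  exact (mul_neg_of_neg_of_pos (by exact_mod_cast hl0) htrE).not_ge htr

theorem hminFeasible_zero_eq_empty_or_univ (ρ : Matrix n n ℂ) :
    hminFeasible ρ 0 = ∅ ∨ hminFeasible ρ 0 = univ := by
  by_cases h : (-ρ).PosSemidef <;> simp [hminFeasible, h]

theorem hminFeasible_submatrix_equiv {m : Type*} (e : m ≃ n) (ρ E : Matrix n n ℂ) :
    hminFeasible (ρ.submatrix e e) (E.submatrix e e) = hminFeasible ρ E := by
  ext l
  exact posSemidef_submatrix_equiv (M := l • E - ρ) e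

theorem hminFeasible_blockDiagonal [Fintype n] {o : Type*} [Fintype o] [DecidableEq o]
    (ρ : o → Matrix n n ℂ) (E : Matrix n n ℂ) :
    hminFeasible (blockDiagonal ρ) (blockDiagonal fun _ => E) = ⋂ k, hminFeasible (ρ k) E := by
  ext l
  simp only [hminFeasible, mem_ofPred_eq, mem_iInter, ← blockDiagonal_smul, ← blockDiagonal_sub,
    posSemidef_blockDiagonal_iff]
  rfl

theorem hminFeasible_sum_subset_iInter {ι : Type*} [Fintype ι]
    {ρ : ι → Matrix n n ℂ} (E : Matrix n n ℂ) (hρ : ∀ i, (ρ i).PosSemidef) :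
    hminFeasible (∑ i, ρ i) E ⊆ ⋂ i, hminFeasible (ρ i) E := by
  refine subset_iInter fun i => hminFeasible_subset_of_posSemidef_sub E ?_
  rw [← Finset.sum_erase_add _ _ (Finset.mem_univ i), add_sub_cancel_right]
  exact posSemidef_sum _ fun j _ => hρ j

theorem card_smul_iInter_hminFeasible_subset {ι : Type*} [Fintype ι] (ρ : ι → Matrix n n ℂ)
    (E : Matrix n n ℂ) :
    (Fintype.card ι : ℝ) • ⋂ i, hminFeasible (ρ i) E ⊆ hminFeasible (∑ i, ρ i) E := by
  rintro _ ⟨l, hl, rfl⟩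
  simpa using sum_mem_hminFeasible_sum Finset.univ (l := fun _ => l) fun i _ => mem_iInter.mp hl i

end Feasible

theorem hmin_monotone_remove_classical_general
    {X b c : Type*} [Fintype X] [DecidableEq X] [Fintype b] [DecidableEq b]
    [Fintype c]
    (P : X → ℝ) (hP0 : ∀ x, 0 ≤ P x) (hP1 : ∑ x, P x = 1)
    (ρx : X → Matrix (b × c) (b × c) ℂ) (hρx : ∀ x, (ρx x).PosSemidef)
    (σC : Matrix c c ℂ) (hσ : σC.PosSemidef) :
    HminRel
        (Matrix.of fun p q : X × b × c =>
          if p.1 = q.1 then (P p.1 : ℂ) * ρx p.1 (p.2.1, p.2.2) (q.2.1, q.2.2) else 0)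
        (Matrix.of fun p q : X × b × c =>
          if p.1 = q.1 ∧ p.2.1 = q.2.1 then σC p.2.2 q.2.2 else 0) ≥
      HminRel (∑ x, (P x : ℂ) • ρx x) ((1 : Matrix b b ℂ) ⊗ₖ σC) := by
  set E : Matrix (b × c) (b × c) ℂ := 1 ⊗ₖ σC
  set ρ : X → Matrix (b × c) (b × c) ℂ := fun x => (P x : ℂ) • ρx x
  have hρXB : (Matrix.of fun p q : X × b × c =>
      if p.1 = q.1 then (P p.1 : ℂ) * ρx p.1 (p.2.1, p.2.2) (q.2.1, q.2.2) else 0) =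
      (blockDiagonal ρ).submatrix (Equiv.prodComm _ _) (Equiv.prodComm _ _) := by
    ext
    simp [ρ, blockDiagonal_apply]
  have hEXB : (Matrix.of fun p q : X × b × c =>
      if p.1 = q.1 ∧ p.2.1 = q.2.1 then σC p.2.2 q.2.2 else 0) =
      (blockDiagonal fun _ : X => E).submatrix (Equiv.prodComm _ _) (Equiv.prodComm _ _) := by
    ext
    simp [E, blockDiagonal_apply, kroneckerMap_apply, one_apply, ite_and]
  rw [ge_iff_le, hρXB, hEXB, hminRel_eq_hminOfFeasible, hminRel_eq_hminOfFeasible,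
    hminFeasible_submatrix_equiv, hminFeasible_blockDiagonal]
  have hρ : ∀ x, (ρ x).PosSemidef := fun x => (hρx x).smul (Complex.zero_le_real.mpr (hP0 x))
  have hsub := hminFeasible_sum_subset_iInter E hρ
  have hscale := card_smul_iInter_hminFeasible_subset ρ E
  have hE : E.PosSemidef := PosSemidef.one.kronecker hσ
  obtain ⟨x₀⟩ : Nonempty X := by
    by_contra! hX
    simp at hP1
  by_cases hE0 : E = 0
  · rw [hE0] at hsub ⊢
    rcases hminFeasible_zero_eq_empty_or_univ (∑ x, ρ x) with h | h
    · simp [h, hminOfFeasible]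
    · rw [h, univ_subset_iff] at hsub
      rw [h, hsub]
  · exact hminOfFeasible_le hsub
      (iInter_subset_of_subset x₀ (hminFeasible_subset_Ici_zero (hρ x₀) hE hE0))
      (Nat.cast_nonneg _) hscale

/-- Monotonicity of min-entropy under removing a classical system:
for `ρ_{XBC} = Σ_x P_X(x)|x⟩⟨x| ⊗ ρ_{BC}^x` classical on `X`,
`H_min(ρ_{XBC}|σ_C) ≥ H_min(ρ_{BC}|σ_C)`. -/
theorem hmin_monotone_remove_classical
    {X b c : Type*} [Fintype X] [DecidableEq X] [Fintype b] [DecidableEq b]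
    [Fintype c] [DecidableEq c]
    (P : X → ℝ) (hP0 : ∀ x, 0 ≤ P x) (hP1 : ∑ x, P x = 1)
    (ρx : X → Matrix (b × c) (b × c) ℂ) (hρx : ∀ x, (ρx x).PosSemidef)
    (σC : Matrix c c ℂ) (hσ : σC.PosSemidef) :
    HminRel
        (Matrix.of fun p q : X × b × c =>
          if p.1 = q.1 then (P p.1 : ℂ) * ρx p.1 (p.2.1, p.2.2) (q.2.1, q.2.2) else 0)
        (Matrix.of fun p q : X × b × c =>
          if p.1 = q.1 ∧ p.2.1 = q.2.1 then σC p.2.2 q.2.2 else 0) ≥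
      HminRel (∑ x, (P x : ℂ) • ρx x) ((1 : Matrix b b ℂ) ⊗ₖ σC) :=
  hmin_monotone_remove_classical_general P hP0 hP1 ρx hρx σC hσ
end

section
/- Let C be a linear subspace of F₂^m with dual code C^⊥, and let P be a probability distribution on F₂^m × F₂^m. For x⃗, s⃗ ∈ F₂^m define the unit vector |φ(x⃗,s⃗)⟩ = (1/√P_S(s⃗)) Σ_{z⃗} (−1)^{x⃗·z⃗} √P(s⃗,z⃗) |s⃗,z⃗⟩, where P_S(s⃗) = Σ_z P(s⃗,z⃗) > 0, and σ^{x⃗,s⃗} = |φ(x⃗,s⃗)⟩⟨φ(x⃗,s⃗)|. Let J be a set of coset representatives of F₂^m/C^⊥ and define P_{J|s⃗}(j⃗) = (Σ_{c⃗∈C^⊥} P(s⃗, j⃗+c⃗))/P_S(s⃗). Then for any a⃗ ∈ F₂^m: (1/|C|) Σ_{x⃗∈C} σ^{x⃗+a⃗, s⃗} = Σ_{j⃗∈J} P_{J|s⃗}(j⃗) |θ(a⃗,s⃗,j⃗)⟩⟨θ(a⃗,s⃗,j⃗)|, where |θ(a⃗,s⃗,j⃗)⟩ = (Σ_{e⃗∈C^⊥}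 P(s⃗,j⃗+e⃗))^{−1/2} Σ_{c⃗∈C^⊥} (−1)^{a⃗·c⃗} √P(s⃗,j⃗+c⃗) |s⃗, j⃗+c⃗⟩. -/
open scoped Classical

/-- `(−1)^{x·y}` for `x, y ∈ F₂^m`, valued in `ℝ`. -/
noncomputable def sgn {m : ℕ} (x y : Fin m → ZMod 2) : ℝ :=
  if (∑ k, x k * y k : ZMod 2) = 0 then 1 else -1

/-- The dual code `C^⊥ = {y : x·y = 0 for all x ∈ C}`. -/
def dualSet {m : ℕ} (C : Submodule (ZMod 2) (Fin m → ZMod 2)) :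
    Set (Fin m → ZMod 2) :=
  {y | ∀ x ∈ C, (∑ k, x k * y k : ZMod 2) = 0}

/-- The rank-one operator `|v⟩⟨v|` for a real vector `v`. -/
def outerProd {ι : Type*} (v : ι → ℝ) : Matrix ι ι ℝ :=
  Matrix.of fun p q => v p * v q

/-- The unit vector `|φ(x,s)⟩ = P_S(s)^{-1/2} Σ_z (−1)^{x·z} √P(s,z) |s,z⟩`. -/
noncomputable def phiVec {m : ℕ} (P : (Fin m → ZMod 2) × (Fin m → ZMod 2) → ℝ)
    (x s : Fin m → ZMod 2) : (Fin m → ZMod 2) × (Fin m → ZMod 2) → ℝ :=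
  fun p => if p.1 = s then
    (Real.sqrt (∑ z, P (s, z)))⁻¹ * sgn x p.2 * Real.sqrt (P (s, p.2)) else 0

/-- The eigenvector `|θ(a,s,j)⟩ = (Σ_{e∈C^⊥} P(s,j+e))^{-1/2}
Σ_{c∈C^⊥} (−1)^{a·c} √P(s,j+c) |s,j+c⟩`. -/
noncomputable def thetaVec {m : ℕ} (C : Submodule (ZMod 2) (Fin m → ZMod 2))
    (P : (Fin m → ZMod 2) × (Fin m → ZMod 2) → ℝ) (a s j : Fin m → ZMod 2) :
    (Fin m → ZMod 2) × (Fin m → ZMod 2) → ℝ :=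
  fun p => (Real.sqrt (∑ e : dualSet C, P (s, j + (e : Fin m → ZMod 2))))⁻¹ *
    ∑ c : dualSet C, sgn a (c : Fin m → ZMod 2) *
      Real.sqrt (P (s, j + (c : Fin m → ZMod 2))) *
      (if p = (s, j + (c : Fin m → ZMod 2)) then 1 else 0)

/-!
Averaging `|φ(x+a,s)⟩⟨φ(x+a,s)|` over `x ∈ C` multiplies the `((s,y),(s,z))` entry by
`|C|⁻¹ Σ_{x∈C} (−1)^{x·(y+z)}`, which by orthogonality of the characters of `C` is the
indicator of `y + z ∈ C^⊥`. The averaged matrix is therefore block diagonal along the cosets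
`j + C^⊥`, and since `(−1)^{a·(y+z)} = (−1)^{a·(y−j)} (−1)^{a·(z−j)}` in characteristic two,
its block at `j` is `P_{J|s}(j) |θ(a,s,j)⟩⟨θ(a,s,j)|`.
-/

open Finset

lemma sum_subtype_ite_eq {α β : Type*} [AddCommMonoid β] {S : Set α} [Fintype S]
    (t : α) [∀ c : S, Decidable ((c : α) = t)] (f : α → β) :
    ∑ c : S, (if (c : α) = t then f c else 0) = if t ∈ S then f t else 0 := by
  split_ifs with ht
  · rw [Fintype.sum_eq_single ⟨t, ht⟩ fun c hc => if_neg fun h => hc (Subtype.ext h)]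
    exact if_pos rfl
  · exact Fintype.sum_eq_zero _ fun c => if_neg fun h : (c : α) = t => ht (h ▸ c.2)

section Duality

variable {m : ℕ}

def signChar : AddChar (ZMod 2) ℝ where
  toFun u := if u = 0 then 1 else -1
  map_zero_eq_one' := if_pos rfl
  map_add_eq_mul' u v := by
    have h : u + v = 0 ↔ (u = 0 ↔ v = 0) := by revert u v; decide
    split_ifs <;> norm_num <;> tauto

lemma sgn_eq_signChar (x y : Fin m → ZMod 2) : sgn x y = signChar (x ⬝ᵥ y) := rfl

lemma sgn_add_left (x a y : Fin m → ZMod 2) : sgn (x + a) y = sgn x y * sgn a y := by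
  simp only [sgn_eq_signChar, add_dotProduct, AddChar.map_add_eq_mul]

lemma sgn_add_right (a y z : Fin m → ZMod 2) : sgn a (y + z) = sgn a y * sgn a z := by
  simp only [sgn_eq_signChar, dotProduct_add, AddChar.map_add_eq_mul]

lemma sgn_sub_mul_sgn_sub (a y z j : Fin m → ZMod 2) :
    sgn a (y - j) * sgn a (z - j) = sgn a (y + z) := by
  rw [← sgn_add_right, ZModModule.sub_eq_add, ZModModule.sub_eq_add, add_comm z j,
    ZModModule.add_add_add_cancel]

lemma sgn_eq_one_iff (x y : Fin m → ZMod 2) : sgn x y = 1 ↔ x ⬝ᵥ y = 0 := by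
  unfold sgn dotProduct; split_ifs with h <;> norm_num [h]

noncomputable def codeChar (C : Submodule (ZMod 2) (Fin m → ZMod 2)) (w : Fin m → ZMod 2) :
    AddChar C ℝ where
  toFun x := sgn x w
  map_zero_eq_one' := by simp [sgn_eq_one_iff]
  map_add_eq_mul' x y := sgn_add_left x y w

lemma codeChar_eq_zero_iff (C : Submodule (ZMod 2) (Fin m → ZMod 2))
    (w : Fin m → ZMod 2) : codeChar C w = 0 ↔ w ∈ dualSet C := by
  simp [AddChar.eq_zero_iff, codeChar, sgn_eq_one_iff, dualSet, dotProduct]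

lemma sum_sgn_eq_ite (C : Submodule (ZMod 2) (Fin m → ZMod 2)) (w : Fin m → ZMod 2) :
    ∑ x : C, sgn (x : Fin m → ZMod 2) w = if w ∈ dualSet C then (Fintype.card C : ℝ) else 0 := by
  rw [← codeChar_eq_zero_iff]
  convert AddChar.sum_eq_ite (codeChar C w) using 2 with x
  rfl

lemma add_mem_dualSet {C : Submodule (ZMod 2) (Fin m → ZMod 2)}
    {u v : Fin m → ZMod 2} (hu : u ∈ dualSet C) (hv : v ∈ dualSet C) :
    u + v ∈ dualSet C := fun x hx => by
  simp [sum_add_distrib, mul_add, hu x hx, hv x hx]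

lemma add_mem_dualSet_iff_right {C : Submodule (ZMod 2) (Fin m → ZMod 2)}
    {u v : Fin m → ZMod 2} (hu : u ∈ dualSet C) : u + v ∈ dualSet C ↔ v ∈ dualSet C :=
  ⟨fun h => by simpa [← add_assoc, ZModModule.add_self] using add_mem_dualSet hu h,
    add_mem_dualSet hu⟩

end Duality

section Entries

variable {m : ℕ} (C : Submodule (ZMod 2) (Fin m → ZMod 2))
  (P : (Fin m → ZMod 2) × (Fin m → ZMod 2) → ℝ) (a s : Fin m → ZMod 2)

noncomputable def mixtureMatrix : Matrix ((Fin m → ZMod 2) × (Fin m → ZMod 2))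
    ((Fin m → ZMod 2) × (Fin m → ZMod 2)) ℝ :=
  Matrix.of fun p q => if p.1 = s ∧ q.1 = s ∧ p.2 + q.2 ∈ dualSet C then
    (∑ z, P (s, z))⁻¹ * sgn a (p.2 + q.2) * (√(P p) * √(P q)) else 0

lemma phiVec_mul_phiVec {x : Fin m → ZMod 2} (hs : 0 ≤ ∑ z, P (s, z))
    (p q : (Fin m → ZMod 2) × (Fin m → ZMod 2)) :
    phiVec P x s p * phiVec P x s q =
      if p.1 = s ∧ q.1 = s then
        (∑ z, P (s, z))⁻¹ * sgn x (p.2 + q.2) * (√(P p) * √(P q)) else 0 := by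
  obtain ⟨p₁, y⟩ := p
  obtain ⟨q₁, z⟩ := q
  have hinv : (√(∑ z, P (s, z)))⁻¹ * (√(∑ z, P (s, z)))⁻¹ = (∑ z, P (s, z))⁻¹ := by
    rw [← mul_inv, Real.mul_self_sqrt hs]
  unfold phiVec
  dsimp only
  by_cases hp : p₁ = s
  · by_cases hq : q₁ = s
    · rw [if_pos hp, if_pos hq, if_pos ⟨hp, hq⟩, hp, hq, sgn_add_right]
      linear_combination sgn x y * sgn x z * √(P (s, y)) * √(P (s, z)) * hinv
    · simp [hq]
  · simp [hp]

lemma smul_sum_outerProd_phiVec (hs : 0 ≤ ∑ z, P (s, z)) :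
    (Fintype.card C : ℝ)⁻¹ • ∑ x : C, outerProd (phiVec P ((x : Fin m → ZMod 2) + a) s) =
      mixtureMatrix C P a s := by
  ext p q
  simp only [Matrix.smul_apply, Matrix.sum_apply, outerProd, Matrix.of_apply, smul_eq_mul,
    mixtureMatrix, phiVec_mul_phiVec P s hs, sgn_add_left]
  by_cases hpq : p.1 = s ∧ q.1 = s
  · simp only [hpq, true_and, if_true]
    set w := p.2 + q.2
    set c := (∑ z, P (s, z))⁻¹ * sgn a w * (√(P p) * √(P q))
    have hfactor : ∑ x : C, (∑ z, P (s, z))⁻¹ * (sgn (x : Fin m → ZMod 2) w * sgn a w) *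
        (√(P p) * √(P q)) = c * ∑ x : C, sgn (x : Fin m → ZMod 2) w := by
      rw [mul_sum]; exact sum_congr rfl fun x _ => by ring
    rw [hfactor, sum_sgn_eq_ite]
    split_ifs
    · field_simp
    · rw [mul_zero, mul_zero]
  · rw [if_neg fun h => hpq ⟨h.1, h.2.1⟩]
    simp [hpq]

lemma thetaVec_apply (j : Fin m → ZMod 2) (p : (Fin m → ZMod 2) × (Fin m → ZMod 2)) :
    thetaVec C P a s j p =
      if p.1 = s ∧ p.2 - j ∈ dualSet C then
        (√(∑ e : dualSet C, P (s, j + (e : Fin m → ZMod 2))))⁻¹ *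
          (sgn a (p.2 - j) * √(P p))
      else 0 := by
  obtain ⟨p₁, y⟩ := p
  have hcoord : ∀ c : Fin m → ZMod 2, ((p₁, y) = (s, j + c)) ↔ p₁ = s ∧ c = y - j := by
    intro c; rw [Prod.mk.injEq, eq_sub_iff_add_eq', eq_comm (a := y)]
  simp only [thetaVec, mul_ite, mul_one, mul_zero, hcoord, ite_and]
  by_cases hp : p₁ = s
  · simp only [if_pos hp]
    rw [sum_subtype_ite_eq (y - j) fun c => sgn a c * √(P (s, j + c)), hp, mul_ite, mul_zero]
    simp only [add_sub_cancel]
  · simp only [if_neg hp, sum_const_zero, mul_zero]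

lemma thetaVec_mul_thetaVec (hP0 : ∀ p, 0 ≤ P p) (j : Fin m → ZMod 2)
    (p q : (Fin m → ZMod 2) × (Fin m → ZMod 2)) :
    thetaVec C P a s j p * thetaVec C P a s j q =
      if p.1 = s ∧ q.1 = s ∧ p.2 - j ∈ dualSet C ∧ q.2 - j ∈ dualSet C then
        (∑ e : dualSet C, P (s, j + (e : Fin m → ZMod 2)))⁻¹ * sgn a (p.2 + q.2) *
          (√(P p) * √(P q))
      else 0 := by
  have hinv : (√(∑ e : dualSet C, P (s, j + (e : Fin m → ZMod 2))))⁻¹ *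
      (√(∑ e : dualSet C, P (s, j + (e : Fin m → ZMod 2))))⁻¹ =
        (∑ e : dualSet C, P (s, j + (e : Fin m → ZMod 2)))⁻¹ := by
    rw [← mul_inv, Real.mul_self_sqrt (sum_nonneg fun _ _ => hP0 _)]
  rw [thetaVec_apply, thetaVec_apply]
  by_cases hp : p.1 = s ∧ p.2 - j ∈ dualSet C
  · by_cases hq : q.1 = s ∧ q.2 - j ∈ dualSet C
    · rw [if_pos hp, if_pos hq, if_pos ⟨hp.1, hq.1, hp.2, hq.2⟩, ← sgn_sub_mul_sgn_sub a p.2 q.2 j]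
      linear_combination sgn a (p.2 - j) * sgn a (q.2 - j) * √(P p) * √(P q) * hinv
    · rw [if_neg hq, mul_zero, if_neg fun h => hq ⟨h.2.1, h.2.2.2⟩]
  · rw [if_neg hp, zero_mul, if_neg fun h => hp ⟨h.1, h.2.2.1⟩]

lemma le_sum_dualSet (hP0 : ∀ p, 0 ≤ P p) {y j : Fin m → ZMod 2} (hy : y - j ∈ dualSet C) :
    P (s, y) ≤ ∑ e : dualSet C, P (s, j + (e : Fin m → ZMod 2)) := by
  simpa using single_le_sum (f := fun e : dualSet C => P (s, j + e)) (fun e _ => hP0 _)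
    (mem_univ ⟨y - j, hy⟩)

lemma sum_smul_outerProd_thetaVec (hP0 : ∀ p, 0 ≤ P p) (J : Finset (Fin m → ZMod 2))
    (hJ : ∀ y : Fin m → ZMod 2, ∃! j, j ∈ J ∧ y - j ∈ dualSet C) :
    ∑ j ∈ J, ((∑ c : dualSet C, P (s, j + (c : Fin m → ZMod 2))) / (∑ z, P (s, z))) •
        outerProd (thetaVec C P a s j) = mixtureMatrix C P a s := by
  ext p q
  obtain ⟨j, ⟨hjJ, hpj⟩, hj_unique⟩ := hJ p.2
  simp only [Matrix.sum_apply, Matrix.smul_apply, outerProd, Matrix.of_apply, smul_eq_mul,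
    mixtureMatrix, thetaVec_mul_thetaVec C P a s hP0]
  rw [sum_eq_single_of_mem j hjJ fun i hiJ hij => by
    rw [if_neg fun h => hij (hj_unique i ⟨hiJ, h.2.2.1⟩), mul_zero]]
  have hqj : q.2 - j ∈ dualSet C ↔ p.2 + q.2 ∈ dualSet C := by
    rw [← add_mem_dualSet_iff_right hpj, ZModModule.sub_eq_add, ZModModule.sub_eq_add,
      add_comm q.2 j, ZModModule.add_add_add_cancel]
  simp only [hpj, hqj, true_and]
  split_ifs with h
  · by_cases hT : ∑ c : dualSet C, P (s, j + (c : Fin m → ZMod 2)) = 0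
    -- an empty block carries no mass, so the junk value `0⁻¹ = 0` is harmless
    · have hPp : P p = 0 := by
        rw [show p = (s, p.2) from Prod.ext h.1 rfl]
        exact le_antisymm (hT ▸ le_sum_dualSet C P s hP0 hpj) (hP0 _)
      simp [hPp]
    · field_simp
  · rw [mul_zero]

end Entries

theorem mixture_of_eve_states_eigendecomposition_general
    {m : ℕ} (C : Submodule (ZMod 2) (Fin m → ZMod 2))
    (P : (Fin m → ZMod 2) × (Fin m → ZMod 2) → ℝ)
    (hP0 : ∀ p, 0 ≤ P p)
    (J : Finset (Fin m → ZMod 2))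
    (hJ : ∀ y : Fin m → ZMod 2, ∃! j, j ∈ J ∧ y - j ∈ dualSet C)
    (a s : Fin m → ZMod 2) :
    (Fintype.card C : ℝ)⁻¹ •
        (∑ x : C, outerProd (phiVec P ((x : Fin m → ZMod 2) + a) s)) =
      ∑ j ∈ J,
        ((∑ c : dualSet C, P (s, j + (c : Fin m → ZMod 2))) / (∑ z, P (s, z))) •
          outerProd (thetaVec C P a s j) := by
  rw [sum_smul_outerProd_thetaVec C P a s hP0 J hJ]
  exact smul_sum_outerProd_phiVec C P a s (sum_nonneg fun z _ => hP0 (s, z))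

/-- Eigendecomposition of the mixture `(1/|C|) Σ_{x∈C} |φ(x+a,s)⟩⟨φ(x+a,s)|` :
it equals `Σ_{j∈J} P_{J|s}(j) |θ(a,s,j)⟩⟨θ(a,s,j)|` for a set `J` of coset
representatives of `F₂^m/C^⊥`. -/
theorem mixture_of_eve_states_eigendecomposition
    {m : ℕ} (C : Submodule (ZMod 2) (Fin m → ZMod 2))
    (P : (Fin m → ZMod 2) × (Fin m → ZMod 2) → ℝ)
    (hP0 : ∀ p, 0 ≤ P p) (hP1 : ∑ p, P p = 1)
    (J : Finset (Fin m → ZMod 2))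
    (hJ : ∀ y : Fin m → ZMod 2, ∃! j, j ∈ J ∧ y - j ∈ dualSet C)
    (a s : Fin m → ZMod 2) (hs : 0 < ∑ z, P (s, z)) :
    (Fintype.card C : ℝ)⁻¹ •
        (∑ x : C, outerProd (phiVec P ((x : Fin m → ZMod 2) + a) s)) =
      ∑ j ∈ J,
        ((∑ c : dualSet C, P (s, j + (c : Fin m → ZMod 2))) / (∑ z, P (s, z))) •
          outerProd (thetaVec C P a s j) :=
  mixture_of_eve_states_eigendecomposition_general C P hP0 J hJ a s
end
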